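/- Proposition (the structure category is left-Ore): Let σ be an involutive non-degenerate quiver-theoretic Yang–Baxter map on a quiver 𝒜, and let C(σ) be its structure category. Then C(σ) is right-cancellative (x ≫ f = y ≫ f implies x = y whenever the compositions are defined), and any two morphisms f, g of C(σ) with the same target admit a left-lcm: there exist a morphism m and morphisms u, v with m = u ≫ f = v ≫ g such that for every common left-multiple z (z = u' ≫ f = v' ≫ g for some u', v') there exists w with z = w ≫ m. In particular C(σ), being also left-cancellative, is a left-Ore category. -/

import Mathlib

/-!
Right-non-degeneracy gives a complement on arrows with a common target: `f ⊘ g` is the unique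
`x` with `x ↼ g = f`, and involutivity gives `(f ⊘ g) ⇀ g = g ⊘ f`. So every defining relation
of `C(σ)` reads `(f ⊘ g) ≫ g = (g ⊘ f) ≫ f`: the presentation is complemented in Dehornoy's
sense, and (YB3) yields the cube condition for `⊘` on letters. Word reversing extends `⊘`
to a residue `u ∖ v` on words (`res`, with `x ∖ x` empty) such that
`(v ∖ u) ≫ u ≡ (u ∖ v) ≫ v`. The cube condition propagates from letters to words by induction
on length, and this makes reversing complete: `u ≡ v` iff `u ∖ v` and `v ∖ u` are both empty.
Right cancellation follows from `(x ≫ f) ∖ (y ≫ f) = x ∖ y`, and `(g ∖ f) ≫ f` is a left-lcm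
of `f` and `g`. Left cancellation is right cancellation for the mirror map
`(x, y) ↦ (y ↼ x, y ⇀ x)` on the reversed quiver, which is right-non-degenerate because `σ` is
left-non-degenerate.
-/

open CategoryTheory

universe u v

/-- A quiver over `Λ` with arrows `A`: source and target maps. -/
structure QuiverData (Λ : Type u) (A : Type v) where
  src : A → Λ
  tgt : A → Λ

namespace QuiverData

variable {Λ : Type u} {A : Type v}

/-- The type of vertices, carrying the quiver structure whose arrows from `a` to `b`
are the elements `x : A` with `src x = a` and `tgt x = b`. -/
def V (_Q : QuiverData Λ A) : Type u := Λ

instance (Q : QuiverData Λ A) : Quiver Q.V where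
  Hom a b := {x : A // Q.src x = a ∧ Q.tgt x = b}

def vert (Q : QuiverData Λ A) (l : Λ) : Q.V := l

/-- The arrow of the quiver `Q.V` corresponding to `x : A`. -/
def arr (Q : QuiverData Λ A) (x : A) {a b : Λ}
    (ha : Q.src x = a) (hb : Q.tgt x = b) : Q.vert a ⟶ Q.vert b :=
  ⟨x, ha, hb⟩

/-- The length-two path `x|y` in the path category. -/
def path2 (Q : QuiverData Λ A) {a m b : Λ} (x y : A)
    (hx : Q.src x = a) (hx' : Q.tgt x = m) (hy : Q.src y = m) (hy' : Q.tgt y = b) :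
    (Paths.of Q.V).obj (Q.vert a) ⟶ (Paths.of Q.V).obj (Q.vert b) :=
  (Paths.of Q.V).map (Q.arr x hx hx') ≫ (Paths.of Q.V).map (Q.arr y hy hy')

/-- The relation `x|y ∼ (x ⇀ y)|(x ↼ y)` on the path category, where `hd = ⇀`, `tl = ↼`. -/
inductive ybRel (Q : QuiverData Λ A) (hd tl : A → A → A) :
    ∀ ⦃X Y : Paths Q.V⦄, (X ⟶ Y) → (X ⟶ Y) → Prop
  | mk (x y : A) (hxy : Q.tgt x = Q.src y)
      (h1 : Q.src (hd x y) = Q.src x)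
      (h2 : Q.tgt (hd x y) = Q.src (tl x y))
      (h3 : Q.tgt (tl x y) = Q.tgt y) :
      ybRel Q hd tl (Q.path2 x y rfl rfl hxy.symm rfl)
        (Q.path2 (hd x y) (tl x y) h1 rfl h2.symm h3)

/-- The structure category `C(σ)`: the quotient of the path category by the congruence
generated by `x|y ∼ (x ⇀ y)|(x ↼ y)`. -/
abbrev SC (Q : QuiverData Λ A) (hd tl : A → A → A) :=
  CategoryTheory.Quotient (Q.ybRel hd tl)

instance (Q : QuiverData Λ A) (hd tl : A → A → A) :
    Category (CategoryTheory.Quotient (Q.ybRel hd tl)) :=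
  CategoryTheory.Quotient.category _

/-- The canonical map `j` from arrows of the quiver to morphisms of the structure category. -/
def jmap (Q : QuiverData Λ A) (hd tl : A → A → A) (x : A) {a b : Λ}
    (ha : Q.src x = a) (hb : Q.tgt x = b) :
    (Quotient.functor (Q.ybRel hd tl)).obj ((Paths.of Q.V).obj (Q.vert a)) ⟶
      (Quotient.functor (Q.ybRel hd tl)).obj ((Paths.of Q.V).obj (Q.vert b)) :=
  (Quotient.functor (Q.ybRel hd tl)).map ((Paths.of Q.V).map (Q.arr x ha hb))

end QuiverData

open Relation

namespace QuiverYB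

variable {Λ : Type u} {A : Type v}

/-- Words are listed target-first: `x :: l` is the path `l` followed by the arrow `x`. -/
inductive IsWord (S T : A → Λ) : Λ → List A → Λ → Prop
  | nil (a : Λ) : IsWord S T a [] a
  | cons {t s : Λ} {l : List A} (x : A) (hx : T x = t) (hl : IsWord S T (S x) l s) :
      IsWord S T t (x :: l) s

namespace IsWord

variable {S T : A → Λ} {t m s s' : Λ} {x : A} {l l₁ l₂ : List A}

theorem eq_of_nil (h : IsWord S T t [] s) : t = s := by
  cases h; rfl

theorem tgt_head (h : IsWord S T t (x :: l) s) : T x = t := by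
  cases h; assumption

theorem tail (h : IsWord S T t (x :: l) s) : IsWord S T (S x) l s := by
  cases h; assumption

theorem singleton (x : A) : IsWord S T (T x) [x] (S x) :=
  cons x rfl (nil _)

theorem append (h₁ : IsWord S T t l₁ m) (h₂ : IsWord S T m l₂ s) :
    IsWord S T t (l₁ ++ l₂) s := by
  induction h₁ with
  | nil => exact h₂
  | cons x hx _ ih => exact cons x hx (ih h₂)

theorem exists_of_append (h : IsWord S T t (l₁ ++ l₂) s) :
    ∃ m, IsWord S T t l₁ m ∧ IsWord S T m l₂ s := by
  induction l₁ generalizing t with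
  | nil => exact ⟨t, nil t, h⟩
  | cons x l ih =>
    obtain ⟨m, h₁, h₂⟩ := ih h.tail
    exact ⟨m, cons x h.tgt_head h₁, h₂⟩

theorem src_unique (h : IsWord S T t l s) (h' : IsWord S T t l s') : s = s' := by
  induction l generalizing t with
  | nil => rw [← h.eq_of_nil, ← h'.eq_of_nil]
  | cons x l ih => exact ih h.tail h'.tail

theorem reverse (h : IsWord S T t l s) : IsWord T S s l.reverse t := by
  induction h with
  | nil a => exact nil a
  | cons x hx _ ih =>
    subst hx
    exact List.reverse_cons .. ▸ ih.append (singleton x)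

end IsWord

/-- `ybRel` on words; with target-first lists the path `x|y` is `y :: x`. -/
inductive Step (S T : A → Λ) (hd tl : A → A → A) : List A → List A → Prop
  | mk (p s : List A) (x y : A) (h : T x = S y) :
      Step S T hd tl (p ++ y :: x :: s) (p ++ tl x y :: hd x y :: s)

namespace Step

variable {S T : A → Λ} {hd tl : A → A → A} {l l' : List A}

theorem exists_eq (h : Step S T hd tl l l') :
    ∃ p s x y, T x = S y ∧ l = p ++ y :: x :: s ∧ l' = p ++ tl x y :: hd x y :: s := by
  obtain ⟨p, s, x, y, hxy⟩ := h
  exact ⟨p, s, x, y, hxy, rfl, rfl⟩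

theorem append_left (m : List A) (h : Step S T hd tl l l') :
    Step S T hd tl (m ++ l) (m ++ l') := by
  obtain ⟨p, s, x, y, hxy⟩ := h
  simpa only [List.append_assoc] using mk (m ++ p) s x y hxy

theorem append_right (m : List A) (h : Step S T hd tl l l') :
    Step S T hd tl (l ++ m) (l' ++ m) := by
  obtain ⟨p, s, x, y, hxy⟩ := h
  simpa only [List.append_assoc, List.cons_append] using mk p (s ++ m) x y hxy

theorem reverse (h : Step S T hd tl l l') :
    Step T S (flip tl) (flip hd) l.reverse l'.reverse := by
  obtain ⟨p, s, x, y, hxy⟩ := h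
  simpa [List.reverse_append, flip] using mk (S := T) (T := S) (hd := flip tl) (tl := flip hd)
    s.reverse p.reverse y x hxy.symm

end Step

section ReflTransGen

variable {S T : A → Λ} {hd tl : A → A → A} {u u' v v' : List A}

theorem reflTransGen_step_append (h₁ : ReflTransGen (Step S T hd tl) u u')
    (h₂ : ReflTransGen (Step S T hd tl) v v') :
    ReflTransGen (Step S T hd tl) (u ++ v) (u' ++ v') :=
  (h₁.lift (· ++ v) fun _ _ h => h.append_right v).trans
    (h₂.lift (u' ++ ·) fun _ _ h => h.append_left u')

theorem reflTransGen_step_cons (x : A) (h : ReflTransGen (Step S T hd tl) u v) :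
    ReflTransGen (Step S T hd tl) (x :: u) (x :: v) :=
  h.lift (x :: ·) fun _ _ h => h.append_left [x]

theorem reflTransGen_step_reverse (h : ReflTransGen (Step S T hd tl) u v) :
    ReflTransGen (Step T S (flip tl) (flip hd)) u.reverse v.reverse :=
  h.lift List.reverse fun _ _ h => h.reverse

end ReflTransGen

section Residue

variable [DecidableEq A] (comp : A → A → A)

def resLetter : List A → A → List A
  | [], _ => []
  | z :: u, y => if z = y then u else comp z y :: resLetter u (comp y z)

def res (u v : List A) : List A := v.foldl (resLetter comp) u

@[simp] theorem resLetter_nil (y : A) : resLetter comp [] y = [] := rfl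

@[simp] theorem resLetter_cons_self (z : A) (u : List A) : resLetter comp (z :: u) z = u := by
  simp [resLetter]

theorem resLetter_cons_of_ne {z y : A} (h : z ≠ y) (u : List A) :
    resLetter comp (z :: u) y = comp z y :: resLetter comp u (comp y z) := by
  simp [resLetter, h]

@[simp] theorem res_nil_right (u : List A) : res comp u [] = u := rfl

theorem res_cons_right (u : List A) (y : A) (v : List A) :
    res comp u (y :: v) = res comp (resLetter comp u y) v := rfl

@[simp] theorem res_singleton (u : List A) (y : A) : res comp u [y] = resLetter comp u y := rfl

@[simp] theorem res_nil_left (v : List A) : res comp [] v = [] := by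
  induction v with
  | nil => rfl
  | cons y v ih => exact ih

theorem res_append_right (u v w : List A) :
    res comp u (v ++ w) = res comp (res comp u v) w :=
  List.foldl_append ..

theorem length_resLetter_le (u : List A) (y : A) : (resLetter comp u y).length ≤ u.length := by
  induction u generalizing y with
  | nil => simp
  | cons z u ih =>
    by_cases h : z = y
    · subst h; simp
    · simpa [resLetter_cons_of_ne comp h] using ih (comp y z)

theorem length_res_le (u v : List A) : (res comp u v).length ≤ u.length := by
  induction v generalizing u with
  | nil => simp
  | cons y v ih => exact le_trans (ih _) (length_resLetter_le comp u y)

theorem res_cons_left (y : A) (u w : List A) :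
    res comp (y :: u) w = res comp [y] w ++ res comp u (res comp w [y]) := by
  induction w generalizing y u with
  | nil => simp
  | cons z w ih =>
    by_cases h : y = z
    · subst h
      simp [res_cons_right]
    · rw [res_cons_right, resLetter_cons_of_ne comp h, ih]
      simp only [res_cons_right, resLetter_cons_of_ne comp h,
        resLetter_cons_of_ne comp (Ne.symm h), resLetter_nil, res_nil_right]

theorem res_append_left (v₁ v₂ u : List A) :
    res comp (v₁ ++ v₂) u = res comp v₁ u ++ res comp v₂ (res comp u v₁) := by
  induction v₁ generalizing u with
  | nil => simp
  | cons y v₁ ih =>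
    rw [List.cons_append, res_cons_left, ih, res_cons_left comp y v₁, List.append_assoc,
      ← res_append_right comp u [y] v₁]
    rfl

@[simp] theorem res_self (u : List A) : res comp u u = [] := by
  induction u with
  | nil => rfl
  | cons z u ih => rwa [res_cons_right, resLetter_cons_self]

theorem res_append_append (f u v : List A) : res comp (f ++ u) (f ++ v) = res comp u v := by
  rw [res_append_right, res_append_left, res_self, res_nil_right, List.nil_append]

def CubeUpTo (comp : A → A → A) (S T : A → Λ) (n : ℕ) : Prop :=
  ∀ ⦃u v w : List A⦄ ⦃t a b c : Λ⦄, u.length + v.length + w.length ≤ n →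
    IsWord S T t u a → IsWord S T t v b → IsWord S T t w c →
    res comp (res comp u v) (res comp w v) = res comp (res comp u w) (res comp v w)

end Residue

structure IsInvolutiveRightNondeg (S T : A → Λ) (hd tl : A → A → A) : Prop where
  src_hd : ∀ x y, T x = S y → S (hd x y) = S x
  tgt_hd : ∀ x y, T x = S y → T (hd x y) = S (tl x y)
  tgt_tl : ∀ x y, T x = S y → T (tl x y) = T y
  tl_tl : ∀ x y z, T x = S y → T y = S z → tl (tl x y) z = tl (tl x (hd y z)) (tl y z)
  hd_hd_tl : ∀ x y, T x = S y → hd (hd x y) (tl x y) = x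
  tl_hd_tl : ∀ x y, T x = S y → tl (hd x y) (tl x y) = y
  bijective_tl : ∀ y, Function.Bijective fun x : {x : A // T x = S y} =>
    (⟨tl x.1 y, tgt_tl x.1 y x.2⟩ : {z : A // T z = T y})

namespace IsInvolutiveRightNondeg

variable {S T : A → Λ} {hd tl : A → A → A} (H : IsInvolutiveRightNondeg S T hd tl)
  {t a b c : Λ}
include H

theorem step_symm {l l' : List A} (h : Step S T hd tl l l') : Step S T hd tl l' l := by
  obtain ⟨p, s, x, y, hxy⟩ := h
  simpa only [H.hd_hd_tl x y hxy, H.tl_hd_tl x y hxy] using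
    Step.mk (hd := hd) (tl := tl) p s (hd x y) (tl x y) (H.tgt_hd x y hxy)

theorem reflTransGen_step_symm {l l' : List A} (h : ReflTransGen (Step S T hd tl) l l') :
    ReflTransGen (Step S T hd tl) l' l :=
  haveI : Std.Symm (Step S T hd tl) := ⟨fun _ _ => H.step_symm⟩
  Std.Symm.symm _ _ h

theorem isWord_of_step {t s : Λ} {l l' : List A} (h : Step S T hd tl l l')
    (hl : IsWord S T t l s) : IsWord S T t l' s := by
  obtain ⟨p, r, x, y, hxy⟩ := h
  obtain ⟨m, hp, hyx⟩ := hl.exists_of_append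
  refine hp.append <| .cons _ ((H.tgt_tl x y hxy).trans hyx.tgt_head) <|
    .cons _ (H.tgt_hd x y hxy) ?_
  rw [H.src_hd x y hxy]
  exact hyx.tail.tail

theorem isWord_of_reflTransGen {t s : Λ} {l l' : List A}
    (h : ReflTransGen (Step S T hd tl) l l') (hl : IsWord S T t l s) : IsWord S T t l' s := by
  induction h with
  | refl => exact hl
  | tail _ h ih => exact H.isWord_of_step h ih

open Classical in
/-- The left complement `f ⊘ g`: for `T f = T g`, the unique `x` with `x ↼ g = f`. -/
noncomputable def compl (f g : A) : A :=
  if h : T f = T g then ((Equiv.ofBijective _ (H.bijective_tl g)).symm ⟨f, h⟩).1 else f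

variable {f g x : A}

theorem tgt_compl (h : T f = T g) : T (H.compl f g) = S g := by
  rw [compl, dif_pos h]
  exact ((Equiv.ofBijective _ (H.bijective_tl g)).symm ⟨f, h⟩).2

theorem tl_compl (h : T f = T g) : tl (H.compl f g) g = f := by
  rw [compl, dif_pos h]
  exact congrArg Subtype.val (Equiv.ofBijective_apply_symm_apply _ (H.bijective_tl g) _)

theorem eq_compl (hx : T x = S g) (he : tl x g = f) : x = H.compl f g := by
  have hf : T f = T g := he ▸ H.tgt_tl x g hx
  rw [compl, dif_pos hf]
  exact congrArg Subtype.val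
    (((Equiv.ofBijective _ (H.bijective_tl g)).symm_apply_eq (y := ⟨x, hx⟩)).2
      (Subtype.ext he.symm)).symm

theorem hd_compl (h : T f = T g) : hd (H.compl f g) g = H.compl g f := by
  have hc := H.tgt_compl h
  refine H.eq_compl ?_ ?_
  · rw [H.tgt_hd _ g hc, H.tl_compl h]
  · simpa only [H.tl_compl h] using H.tl_hd_tl _ g hc

theorem src_compl_comm (h : T f = T g) : S (H.compl f g) = S (H.compl g f) := by
  rw [← H.hd_compl h, H.src_hd _ g (H.tgt_compl h)]

theorem compl_left_injective {f' : A} (h : T f = T g) (h' : T f' = T g)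
    (e : H.compl f g = H.compl f' g) : f = f' := by
  rw [← H.tl_compl h, e, H.tl_compl h']

theorem compl_cube {x y z : A} (hxz : T x = T z) (hyz : T y = T z) :
    H.compl (H.compl x y) (H.compl z y) = H.compl (H.compl x z) (H.compl y z) := by
  have hxy : T x = T y := hxz.trans hyz.symm
  have hzy : T z = T y := hyz.symm
  have hTa : T (H.compl y z) = S z := H.tgt_compl hyz
  have hab : T (H.compl x z) = T (H.compl y z) := (H.tgt_compl hxz).trans hTa.symm
  set c := H.compl (H.compl x z) (H.compl y z)
  have hTc : T c = S (H.compl y z) := H.tgt_compl hab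
  have hyb := H.tl_tl c _ z hTc hTa
  rw [H.tl_compl hab, H.tl_compl hxz, H.hd_compl hyz, H.tl_compl hyz] at hyb
  have hsrc : S (H.compl z y) = S (H.compl y z) := H.src_compl_comm hzy
  have hc : tl c (H.compl z y) = H.compl x y :=
    H.eq_compl (by rw [H.tgt_tl c _ (hTc.trans hsrc.symm), H.tgt_compl hzy]) hyb.symm
  refine (H.eq_compl ?_ hc).symm
  rw [hTc, hsrc]

section Reversing

variable [DecidableEq A]

theorem resLetter_spec {u : List A} {y : A} (hu : IsWord S T t u a)
    (hy : T y = t) :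
    ∃ e, IsWord S T a (res H.compl [y] u) e ∧ IsWord S T (S y) (resLetter H.compl u y) e ∧
      ReflTransGen (Step S T hd tl) (u ++ res H.compl [y] u) (y :: resLetter H.compl u y) := by
  induction u generalizing t y with
  | nil =>
    obtain rfl := hu.eq_of_nil
    exact ⟨S y, .cons y hy (.nil _), .nil _, .refl⟩
  | cons z u ih =>
    have hzy : T z = T y := hu.tgt_head.trans hy.symm
    by_cases h : z = y
    · subst h
      simp only [res_cons_right, resLetter_cons_self, res_nil_left, List.append_nil]
      exact ⟨a, .nil a, hu.tail, .refl⟩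
    · obtain ⟨e, h₁, h₂, h₃⟩ := ih hu.tail (H.tgt_compl hzy.symm)
      rw [res_cons_right, resLetter_cons_of_ne _ (Ne.symm h), resLetter_nil,
        resLetter_cons_of_ne _ h]
      refine ⟨e, h₁, .cons _ (H.tgt_compl hzy) (by rwa [H.src_compl_comm hzy]), ?_⟩
      have hstep : Step S T hd tl (z :: H.compl y z :: resLetter H.compl u (H.compl y z))
          (y :: H.compl z y :: resLetter H.compl u (H.compl y z)) := by
        simpa only [H.tl_compl hzy.symm, H.hd_compl hzy.symm, List.nil_append] using
          Step.mk (hd := hd) (tl := tl) [] _ (H.compl y z) z (H.tgt_compl hzy.symm)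
      exact (reflTransGen_step_cons z h₃).tail hstep

theorem res_spec {u v : List A} (hu : IsWord S T t u a) (hv : IsWord S T t v b) :
    ∃ e, IsWord S T a (res H.compl v u) e ∧ IsWord S T b (res H.compl u v) e ∧
      ReflTransGen (Step S T hd tl) (u ++ res H.compl v u) (v ++ res H.compl u v) := by
  induction v generalizing u a t with
  | nil =>
    obtain rfl := hv.eq_of_nil
    exact ⟨a, by simpa using IsWord.nil a, by simpa using hu, by simpa using .refl⟩
  | cons y v ih =>
    obtain ⟨e₁, h₁, h₂, h₃⟩ := H.resLetter_spec hu hv.tgt_head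
    obtain ⟨e, g₁, g₂, g₃⟩ := ih h₂ hv.tail
    rw [res_cons_left _ y v u, res_cons_right _ u y v, res_singleton, ← List.append_assoc]
    exact ⟨e, h₁.append g₁, g₂,
      (reflTransGen_step_append h₃ .refl).trans (reflTransGen_step_cons y g₃)⟩

theorem exists_isWord_res {u v : List A} (hu : IsWord S T t u a)
    (hv : IsWord S T t v b) : ∃ e, IsWord S T b (res H.compl u v) e :=
  let ⟨e, _, h, _⟩ := H.res_spec hu hv
  ⟨e, h⟩

theorem cube_letters {x y z : A} (hxz : T x = T z) (hyz : T y = T z) :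
    res H.compl (res H.compl [x] [y]) (res H.compl [z] [y]) =
      res H.compl (res H.compl [x] [z]) (res H.compl [y] [z]) := by
  have hres : ∀ a b : A, a ≠ b → res H.compl [a] [b] = [H.compl a b] := fun a b h => by
    rw [res_singleton, resLetter_cons_of_ne _ h, resLetter_nil]
  by_cases hxy : x = y
  · subst hxy; simp
  by_cases hxz' : x = z
  · subst hxz'; simp
  by_cases hyz' : y = z
  · subst hyz'; simp
  have hne₁ : H.compl x y ≠ H.compl z y := fun h =>
    hxz' (H.compl_left_injective (hxz.trans hyz.symm) hyz.symm h)
  have hne₂ : H.compl x z ≠ H.compl y z := fun h =>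
    hxy (H.compl_left_injective hxz hyz h)
  rw [hres x y hxy, hres z y (Ne.symm hyz'), hres x z hxz', hres y z hyz', hres _ _ hne₁,
    hres _ _ hne₂, H.compl_cube hxz hyz]

theorem cube_cons_left {n : ℕ} (IH : CubeUpTo H.compl S T n) {x : A} {u v w : List A}
    (hu : u ≠ []) (hn : (x :: u).length + v.length + w.length ≤ n + 1)
    (hxu : IsWord S T t (x :: u) a)
    (hv : IsWord S T t v b) (hw : IsWord S T t w c) :
    res H.compl (res H.compl (x :: u) v) (res H.compl w v) =
      res H.compl (res H.compl (x :: u) w) (res H.compl v w) := by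
  have hx : IsWord S T t [x] (S x) := .cons x hxu.tgt_head (.nil _)
  obtain ⟨_, hvx⟩ := H.exists_isWord_res hv hx
  obtain ⟨_, hwx⟩ := H.exists_isWord_res hw hx
  have hu₀ := List.length_pos_iff.mpr hu
  have hvx₀ := length_res_le H.compl v [x]
  have hwx₀ := length_res_le H.compl w [x]
  simp only [List.length_cons] at hn
  have c₁ := IH (by simp only [List.length_singleton]; omega) hx hv hw
  have c₂ := IH (by simp only [List.length_singleton]; omega) hw hv hx
  have c₃ := IH (by omega) hxu.tail hvx hwx
  have c₄ := IH (by simp only [List.length_singleton]; omega) hv hx hw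
  rw [← List.singleton_append, res_append_left, res_append_left, c₁, c₂, c₃, c₄,
    ← res_append_left, ← res_append_left]

theorem cube_cons_middle {n : ℕ} (IH : CubeUpTo H.compl S T n) {y : A} {u v w : List A}
    (hv : v ≠ []) (hn : u.length + (y :: v).length + w.length ≤ n + 1) (hu : IsWord S T t u a)
    (hyv : IsWord S T t (y :: v) b) (hw : IsWord S T t w c) :
    res H.compl (res H.compl u (y :: v)) (res H.compl w (y :: v)) =
      res H.compl (res H.compl u w) (res H.compl (y :: v) w) := by
  have hy : IsWord S T t [y] (S y) := .cons y hyv.tgt_head (.nil _)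
  obtain ⟨_, huy⟩ := H.exists_isWord_res hu hy
  obtain ⟨_, hwy⟩ := H.exists_isWord_res hw hy
  have hv₀ := List.length_pos_iff.mpr hv
  have huy₀ := length_res_le H.compl u [y]
  have hwy₀ := length_res_le H.compl w [y]
  simp only [List.length_cons] at hn
  have c₁ := IH (by omega) huy hyv.tail hwy
  have c₂ := IH (by simp only [List.length_singleton]; omega) hu hy hw
  rw [← List.singleton_append, res_append_right, res_append_right, c₁, c₂, res_append_left,
    ← res_append_right]

theorem cubeUpTo (n : ℕ) : CubeUpTo H.compl S T n := by
  induction n with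
  | zero =>
    intro u v w t a b c hn _ _ _
    obtain rfl : u = [] := List.eq_nil_of_length_eq_zero (by omega)
    simp
  | succ n IH =>
    intro u v w t a b c hn hu hv hw
    match u, v, w, hu, hv, hw with
    | [], _, _, _, _, _ => simp
    | _, [], _, _, _, _ => simp
    | _, _, [], _, _, _ => simp
    | [x], [y], [z], hu, hv, hw =>
      exact H.cube_letters (hu.tgt_head.trans hw.tgt_head.symm)
        (hv.tgt_head.trans hw.tgt_head.symm)
    | [x], [y], z :: z' :: w, hu, hv, hw =>
      refine (H.cube_cons_middle IH (List.cons_ne_nil _ _) ?_ hu hw hv).symm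
      simp only [List.length_cons] at hn ⊢
      omega
    | [x], y :: y' :: v, w, hu, hv, hw =>
      exact H.cube_cons_middle IH (List.cons_ne_nil _ _) hn hu hv hw
    | x :: x' :: u, v, w, hu, hv, hw =>
      exact H.cube_cons_left IH (List.cons_ne_nil _ _) hn hu hv hw

theorem res_cube {u v w : List A} (hu : IsWord S T t u a) (hv : IsWord S T t v b)
    (hw : IsWord S T t w c) :
    res H.compl (res H.compl u v) (res H.compl w v) =
      res H.compl (res H.compl u w) (res H.compl v w) :=
  H.cubeUpTo _ le_rfl hu hv hw

theorem res_eq_nil_of_step {l l' : List A} (h : Step S T hd tl l l') :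
    res H.compl l l' = [] := by
  obtain ⟨p, s, x, y, hxy⟩ := h
  rw [res_append_append]
  have hty : T (tl x y) = T y := H.tgt_tl x y hxy
  have hx : x = H.compl (tl x y) y := H.eq_compl hxy rfl
  have hhd : hd x y = H.compl y (tl x y) := (congrArg (hd · y) hx).trans (H.hd_compl hty)
  by_cases hy : y = tl x y
  · have hx' : x = H.compl y y := by
      conv_lhs => rw [hx]
      rw [← hy]
    have hhd' : hd x y = x := by rw [hhd, ← hy, ← hx']
    rw [← hy, hhd', res_self]
  · rw [res_cons_right, resLetter_cons_of_ne _ hy, ← hhd, ← hx, res_cons_right,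
      resLetter_cons_self, resLetter_cons_self, res_self]

theorem reflTransGen_iff_res_eq_nil {u v : List A} (hu : IsWord S T t u a)
    (hv : IsWord S T t v b) :
    ReflTransGen (Step S T hd tl) u v ↔ res H.compl u v = [] ∧ res H.compl v u = [] := by
  constructor
  · intro h
    induction h generalizing b with
    | refl => simp
    | @tail w w' h hstep ih =>
      have hw := H.isWord_of_reflTransGen h hu
      obtain ⟨e₁, e₂⟩ := ih hw
      have c₁ := H.res_cube hu hw hv
      have c₂ := H.res_cube hv hw hu
      rw [e₁, res_nil_left, H.res_eq_nil_of_step hstep, res_nil_right] at c₁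
      rw [H.res_eq_nil_of_step (H.step_symm hstep), res_nil_left, e₂, res_nil_right] at c₂
      exact ⟨c₁.symm, c₂.symm⟩
  · rintro ⟨h₁, h₂⟩
    obtain ⟨_, _, _, h⟩ := H.res_spec hu hv
    simpa only [h₁, h₂, List.append_nil] using h

theorem exists_reflTransGen_res_append {e e' : Λ} {f g u' v' : List A}
    (hf : IsWord S T t f a) (he : IsWord S T a (res H.compl g f) e)
    (hu' : IsWord S T a u' e') (h : ReflTransGen (Step S T hd tl) (f ++ u') (g ++ v')) :
    ∃ w, IsWord S T e w e' ∧
      ReflTransGen (Step S T hd tl) (f ++ u') (f ++ res H.compl g f ++ w) := by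
  have hfu := hf.append hu'
  have hres : res H.compl (res H.compl g f) u' = [] := by
    have := ((H.reflTransGen_iff_res_eq_nil hfu (H.isWord_of_reflTransGen h hfu)).1 h).2
    rw [res_append_right, res_append_left, res_append_left] at this
    exact (List.append_eq_nil_iff.mp this).1
  obtain ⟨E, hE, hw, hrev⟩ := H.res_spec hu' he
  rw [hres] at hE hrev
  obtain rfl := hE.eq_of_nil
  refine ⟨_, hw, ?_⟩
  rw [List.append_nil] at hrev
  simpa only [List.append_assoc] using reflTransGen_step_append (.refl (a := f)) hrev

end Reversing

theorem reflTransGen_cancel_prefix {f x y : List A} (hx : IsWord S T t (f ++ x) a)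
    (h : ReflTransGen (Step S T hd tl) (f ++ x) (f ++ y)) :
    ReflTransGen (Step S T hd tl) x y := by
  classical
  have hy := H.isWord_of_reflTransGen h hx
  obtain ⟨m, hf, hx'⟩ := hx.exists_of_append
  obtain ⟨m', hf', hy'⟩ := hy.exists_of_append
  obtain rfl := hf.src_unique hf'
  have e := (H.reflTransGen_iff_res_eq_nil hx hy).1 h
  rw [res_append_append, res_append_append] at e
  exact (H.reflTransGen_iff_res_eq_nil hx' hy').2 e

end IsInvolutiveRightNondeg

theorem reflTransGen_cancel_suffix {S T : A → Λ} {hd tl : A → A → A}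
    (H : IsInvolutiveRightNondeg T S (flip tl) (flip hd)) {t a : Λ} {f x y : List A}
    (hx : IsWord S T t (x ++ f) a) (h : ReflTransGen (Step S T hd tl) (x ++ f) (y ++ f)) :
    ReflTransGen (Step S T hd tl) x y := by
  have hx' := hx.reverse
  have h' := reflTransGen_step_reverse h
  simp only [List.reverse_append] at hx' h'
  simpa using reflTransGen_step_reverse (H.reflTransGen_cancel_prefix hx' h')

end QuiverYB

namespace QuiverData

open QuiverYB

variable {Λ : Type u} {A : Type v} (Q : QuiverData Λ A)

def word {a : Q.V} : ∀ {b : Q.V}, Quiver.Path a b → List A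
  | _, .nil => []
  | _, .cons p e => e.1 :: word p

@[simp] theorem word_nil {a : Q.V} : Q.word (Quiver.Path.nil (a := a)) = [] := rfl

@[simp] theorem word_cons {a b c : Q.V} (p : Quiver.Path a b) (e : b ⟶ c) :
    Q.word (p.cons e) = e.1 :: Q.word p := rfl

theorem isWord_word {a b : Q.V} (p : Quiver.Path a b) : IsWord Q.src Q.tgt b (Q.word p) a := by
  induction p with
  | nil => exact .nil _
  | cons p e ih => exact .cons e.1 e.2.2 (by rw [e.2.1]; exact ih)

@[simp] theorem word_pathComp {a b c : Q.V} (p : Quiver.Path a b) (q : Quiver.Path b c) :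
    Q.word (p.comp q) = Q.word q ++ Q.word p := by
  induction q with
  | nil => rfl
  | cons q e ih => exact congrArg (e.1 :: ·) ih

@[simp] theorem word_comp {a b c : Paths Q.V} (p : a ⟶ b) (q : b ⟶ c) :
    Q.word (p ≫ q) = Q.word q ++ Q.word p :=
  Q.word_pathComp p q

theorem word_injective {a b : Q.V} {p q : Quiver.Path a b} (h : Q.word p = Q.word q) :
    p = q := by
  induction p with
  | nil => cases q with
    | nil => rfl
    | cons => simp at h
  | cons p e ih => cases q with
    | nil => simp at h
    | cons q e' =>
      simp only [word_cons, List.cons.injEq] at h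
      obtain ⟨x, hx, hx'⟩ := e
      obtain ⟨x', hy, hy'⟩ := e'
      obtain ⟨rfl, h⟩ := h
      subst hx hy
      rw [ih h]

def ofWord : (l : List A) → ∀ {t s : Λ}, IsWord Q.src Q.tgt t l s →
    @Quiver.Path Q.V _ s t
  | [], _, _, h => by rw [h.eq_of_nil]; exact .nil
  | x :: l, _, _, h => (ofWord l h.tail).cons ⟨x, rfl, h.tgt_head⟩

@[simp] theorem word_ofWord (l : List A) {t s : Λ} (h : IsWord Q.src Q.tgt t l s) :
    Q.word (Q.ofWord l h) = l := by
  induction l generalizing t with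
  | nil => obtain rfl := h.eq_of_nil; rfl
  | cons x l ih => exact congrArg (x :: ·) (ih h.tail)

theorem exists_eq_comp_of_word_eq_append (l₁ : List A) {a b : Q.V} (p : Quiver.Path a b)
    {l₂ : List A} (h : Q.word p = l₁ ++ l₂) :
    ∃ (m : Q.V) (p₂ : Quiver.Path a m) (p₁ : Quiver.Path m b),
      p = p₂.comp p₁ ∧ Q.word p₁ = l₁ ∧ Q.word p₂ = l₂ := by
  induction l₁ generalizing b with
  | nil => exact ⟨_, p, .nil, rfl, rfl, h⟩
  | cons z l₁ ih =>
    cases p with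
    | nil => simp at h
    | cons p e =>
      simp only [word_cons, List.cons_append, List.cons.injEq] at h
      obtain ⟨m, p₂, p₁, rfl, hp₁, hp₂⟩ := ih p h.2
      exact ⟨m, p₂, p₁.cons e, rfl, by simp [hp₁, h.1], hp₂⟩

@[simp] theorem word_path2 {a m b : Λ} (x y : A) (hx : Q.src x = a) (hx' : Q.tgt x = m)
    (hy : Q.src y = m) (hy' : Q.tgt y = b) : Q.word (Q.path2 x y hx hx' hy hy') = [y, x] :=
  rfl

variable (hd tl : A → A → A)

-- Instance search does not unfold `HomRel`, so it cannot find `Quotient.full_functor` itself.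
instance : (Quotient.functor (Q.ybRel hd tl)).Full :=
  Quotient.full_functor _

variable (H : IsInvolutiveRightNondeg Q.src Q.tgt hd tl)
include H

theorem exists_map_eq_of_word_eq_pair {a b : Q.V} (p : Quiver.Path a b) {x y : A}
    (h : Q.word p = [y, x]) :
    ∃ q : Quiver.Path a b, Q.word q = [tl x y, hd x y] ∧
      (Quotient.functor (Q.ybRel hd tl)).map p = (Quotient.functor (Q.ybRel hd tl)).map q := by
  rcases p with _ | ⟨_ | ⟨_ | ⟨_, _⟩, ex⟩, ey⟩
  all_goals simp only [word_cons, word_nil, List.cons.injEq, reduceCtorEq, and_false,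
    List.nil_eq, and_true] at h
  obtain ⟨x', rfl, hx⟩ := ex
  obtain ⟨y', hy, rfl⟩ := ey
  obtain ⟨rfl, rfl⟩ := h
  subst hx
  have hxy := hy.symm
  exact ⟨Q.path2 (hd x' y') (tl x' y') (H.src_hd x' y' hxy) rfl (H.tgt_hd x' y' hxy).symm
    (H.tgt_tl x' y' hxy), rfl, CategoryTheory.Quotient.sound _ (ybRel.mk x' y' hxy
      (H.src_hd x' y' hxy) (H.tgt_hd x' y' hxy) (H.tgt_tl x' y' hxy))⟩

theorem exists_map_eq_of_step {a b : Q.V} (p : Quiver.Path a b) {l' : List A}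
    (h : Step Q.src Q.tgt hd tl (Q.word p) l') :
    ∃ q : Quiver.Path a b, Q.word q = l' ∧
      (Quotient.functor (Q.ybRel hd tl)).map p = (Quotient.functor (Q.ybRel hd tl)).map q := by
  obtain ⟨P, S₀, x, y, hxy, hl, rfl⟩ := h.exists_eq
  obtain ⟨_, p₂, p₁, rfl, hp₁, hp₂⟩ := Q.exists_eq_comp_of_word_eq_append P p hl
  obtain ⟨_, p₃, p₀, rfl, hp₀, hp₃⟩ :=
    Q.exists_eq_comp_of_word_eq_append [y, x] p₂ hp₂
  obtain ⟨q, hq, hpq⟩ := Q.exists_map_eq_of_word_eq_pair hd tl H p₀ hp₀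
  refine ⟨(p₃.comp q).comp p₁, by simp [hp₁, hp₃, hq], ?_⟩
  set F := Quotient.functor (Q.ybRel hd tl)
  calc F.map ((p₃.comp p₀).comp p₁) = (F.map p₃ ≫ F.map p₀) ≫ F.map p₁ :=
        (F.map_comp (p₃ ≫ p₀) p₁).trans
          (congrArg (· ≫ F.map p₁) (F.map_comp p₃ p₀))
    _ = F.map ((p₃.comp q).comp p₁) := by
        rw [hpq]
        exact ((F.map_comp (p₃ ≫ q) p₁).trans
          (congrArg (· ≫ F.map p₁) (F.map_comp p₃ q))).symm

theorem map_eq_map_iff {a b : Paths Q.V} (p q : a ⟶ b) :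
    (Quotient.functor (Q.ybRel hd tl)).map p = (Quotient.functor (Q.ybRel hd tl)).map q ↔
      ReflTransGen (Step Q.src Q.tgt hd tl) (Q.word p) (Q.word q) := by
  constructor
  · intro h
    replace h := (Quotient.functor_homRel_eq_compClosure_eqvGen _ p q).1 h
    induction h with
    | rel _ _ h =>
      obtain ⟨_, _, f, _, _, g, ⟨x, y, hxy, -, -, -⟩⟩ := h
      refine .single ?_
      simpa using Step.mk (hd := hd) (tl := tl) (Q.word g) (Q.word f) x y hxy
    | refl => exact .refl
    | symm _ _ _ ih => exact H.reflTransGen_step_symm ih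
    | trans _ _ _ _ _ ih₁ ih₂ => exact ih₁.trans ih₂
  · intro h
    suffices ∀ l, ReflTransGen (Step Q.src Q.tgt hd tl) (Q.word p) l →
        ∃ q' : a ⟶ b, Q.word q' = l ∧
          (Quotient.functor (Q.ybRel hd tl)).map p = (Quotient.functor (Q.ybRel hd tl)).map q' by
      obtain ⟨q', hq', hpq'⟩ := this _ h
      rwa [Q.word_injective hq'] at hpq'
    intro l hl
    induction hl with
    | refl => exact ⟨p, rfl, rfl⟩
    | tail _ hs ih =>
      obtain ⟨q', rfl, hpq'⟩ := ih
      obtain ⟨q'', hq'', hq'q''⟩ := Q.exists_map_eq_of_step hd tl H q' hs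
      exact ⟨q'', hq'', hpq'.trans hq'q''⟩

theorem map_comp_eq_map_comp_iff {a b b' c : Paths Q.V} (p : a ⟶ b) (q : b ⟶ c)
    (p' : a ⟶ b') (q' : b' ⟶ c) :
    (Quotient.functor (Q.ybRel hd tl)).map p ≫ (Quotient.functor (Q.ybRel hd tl)).map q =
        (Quotient.functor (Q.ybRel hd tl)).map p' ≫ (Quotient.functor (Q.ybRel hd tl)).map q' ↔
      ReflTransGen (Step Q.src Q.tgt hd tl) (Q.word q ++ Q.word p) (Q.word q' ++ Q.word p') := by
  rw [← Functor.map_comp, ← Functor.map_comp, Q.map_eq_map_iff hd tl H, word_comp, word_comp]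

theorem structureCategory_cancel_right {a b c : Q.SC hd tl} (f : b ⟶ c) (x y : a ⟶ b)
    (h : x ≫ f = y ≫ f) : x = y := by
  obtain ⟨pf, rfl⟩ := (Quotient.functor (Q.ybRel hd tl)).map_surjective f
  obtain ⟨px, rfl⟩ := (Quotient.functor (Q.ybRel hd tl)).map_surjective x
  obtain ⟨py, rfl⟩ := (Quotient.functor (Q.ybRel hd tl)).map_surjective y
  rw [Q.map_comp_eq_map_comp_iff hd tl H] at h
  rw [Q.map_eq_map_iff hd tl H]
  exact H.reflTransGen_cancel_prefix (Q.word_comp px pf ▸ Q.isWord_word _) h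

theorem structureCategory_cancel_left
    (H' : IsInvolutiveRightNondeg Q.tgt Q.src (flip tl) (flip hd)) {a b c : Q.SC hd tl}
    (f : a ⟶ b) (x y : b ⟶ c) (h : f ≫ x = f ≫ y) : x = y := by
  obtain ⟨pf, rfl⟩ := (Quotient.functor (Q.ybRel hd tl)).map_surjective f
  obtain ⟨px, rfl⟩ := (Quotient.functor (Q.ybRel hd tl)).map_surjective x
  obtain ⟨py, rfl⟩ := (Quotient.functor (Q.ybRel hd tl)).map_surjective y
  rw [Q.map_comp_eq_map_comp_iff hd tl H] at h
  rw [Q.map_eq_map_iff hd tl H]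
  exact reflTransGen_cancel_suffix H' (Q.word_comp pf px ▸ Q.isWord_word _) h

theorem structureCategory_exists_leftLcm {b c d : Q.SC hd tl} (f : b ⟶ d) (g : c ⟶ d) :
    ∃ (a : Q.SC hd tl) (u : a ⟶ b) (v : a ⟶ c), u ≫ f = v ≫ g ∧
      ∀ (e : Q.SC hd tl) (u' : e ⟶ b) (v' : e ⟶ c),
        u' ≫ f = v' ≫ g → ∃ w : e ⟶ a, u' ≫ f = w ≫ (u ≫ f) := by
  classical
  set F := Quotient.functor (Q.ybRel hd tl)
  obtain ⟨pf, rfl⟩ := F.map_surjective f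
  obtain ⟨pg, rfl⟩ := F.map_surjective g
  have hf := Q.isWord_word pf
  obtain ⟨a, hu, hv, hrev⟩ := H.res_spec hf (Q.isWord_word pg)
  refine ⟨F.obj (Q.vert a), F.map (Q.ofWord _ hu), F.map (Q.ofWord _ hv), ?_, ?_⟩
  · refine (Q.map_comp_eq_map_comp_iff hd tl H _ _ _ _).2 ?_
    convert hrev using 3 <;> exact Q.word_ofWord _ _
  · intro e u' v' h
    obtain ⟨pu, rfl⟩ := F.map_surjective u'
    obtain ⟨pv, rfl⟩ := F.map_surjective v'
    rw [Q.map_comp_eq_map_comp_iff hd tl H] at h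
    obtain ⟨w, hw, hfw⟩ := H.exists_reflTransGen_res_append hf hu (Q.isWord_word pu) h
    refine ⟨F.map (Q.ofWord w hw), ?_⟩
    rw [← Category.assoc, ← F.map_comp]
    refine (Q.map_comp_eq_map_comp_iff hd tl H _ _ _ _).2 ?_
    rw [word_comp]
    rw [List.append_assoc] at hfw
    convert hfw using 4 <;> exact Q.word_ofWord _ _

end QuiverData

theorem structureCategory_leftOre_general
    {Λ : Type u} {A : Type v} (Q : QuiverData Λ A) (hd tl : A → A → A)
    -- σ is a morphism of quivers
    (hs : ∀ x y, Q.tgt x = Q.src y → Q.src (hd x y) = Q.src x)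
    (hm : ∀ x y, Q.tgt x = Q.src y → Q.tgt (hd x y) = Q.src (tl x y))
    (ht : ∀ x y, Q.tgt x = Q.src y → Q.tgt (tl x y) = Q.tgt y)
    -- the Yang–Baxter equation in components
    (yb1 : ∀ x y z, Q.tgt x = Q.src y → Q.tgt y = Q.src z →
      hd (hd x y) (hd (tl x y) z) = hd x (hd y z))
    (yb3 : ∀ x y z, Q.tgt x = Q.src y → Q.tgt y = Q.src z →
      tl (tl x y) z = tl (tl x (hd y z)) (tl y z))
    -- involutivity
    (inv1 : ∀ x y, Q.tgt x = Q.src y → hd (hd x y) (tl x y) = x)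
    (inv2 : ∀ x y, Q.tgt x = Q.src y → tl (hd x y) (tl x y) = y)
    -- left-non-degeneracy
    (lnd : ∀ x : A, Function.Bijective fun y : {y : A // Q.src y = Q.tgt x} =>
      (⟨hd x y.1, hs x y.1 y.2.symm⟩ : {z : A // Q.src z = Q.src x}))
    -- right-non-degeneracy
    (rnd : ∀ y : A, Function.Bijective fun x : {x : A // Q.tgt x = Q.src y} =>
      (⟨tl x.1 y, ht x.1 y x.2⟩ : {z : A // Q.tgt z = Q.tgt y}))
    :
    -- conclusion 1: the structure category is right-cancellative
    (∀ (a b c : Q.SC hd tl) (f : b ⟶ c) (x y : a ⟶ b), x ≫ f = y ≫ f → x = y) ∧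
    -- conclusion 2: it is left-cancellative (so, with conclusion 1, cancellative)
    (∀ (a b c : Q.SC hd tl) (f : a ⟶ b) (x y : b ⟶ c), f ≫ x = f ≫ y → x = y) ∧
    -- conclusion 3: any two morphisms with the same target admit a left-lcm; in particular
    -- the structure category is a left-Ore category
    (∀ (b c d : Q.SC hd tl) (f : b ⟶ d) (g : c ⟶ d),
      ∃ (a : Q.SC hd tl) (u : a ⟶ b) (v : a ⟶ c),
        u ≫ f = v ≫ g ∧
        ∀ (e : Q.SC hd tl) (u' : e ⟶ b) (v' : e ⟶ c),
          u' ≫ f = v' ≫ g → ∃ w : e ⟶ a, u' ≫ f = w ≫ (u ≫ f)) := by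
  have H : QuiverYB.IsInvolutiveRightNondeg Q.src Q.tgt hd tl :=
    ⟨hs, hm, ht, yb3, inv1, inv2, rnd⟩
  have H' : QuiverYB.IsInvolutiveRightNondeg Q.tgt Q.src (flip tl) (flip hd) :=
    ⟨fun x y h => ht y x h.symm, fun x y h => (hm y x h.symm).symm, fun x y h => hs y x h.symm,
      fun x y z hxy hyz => (yb1 z y x hyz.symm hxy.symm).symm, fun x y h => inv2 y x h.symm,
      fun x y h => inv1 y x h.symm, lnd⟩
  exact ⟨fun _ _ _ => Q.structureCategory_cancel_right hd tl H,
    fun _ _ _ => Q.structureCategory_cancel_left hd tl H H',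
    fun _ _ _ => Q.structureCategory_exists_leftLcm hd tl H⟩

theorem structureCategory_leftOre
    {Λ : Type u} {A : Type v} (Q : QuiverData Λ A) (hd tl : A → A → A)
    -- σ is a morphism of quivers
    (hs : ∀ x y, Q.tgt x = Q.src y → Q.src (hd x y) = Q.src x)
    (hm : ∀ x y, Q.tgt x = Q.src y → Q.tgt (hd x y) = Q.src (tl x y))
    (ht : ∀ x y, Q.tgt x = Q.src y → Q.tgt (tl x y) = Q.tgt y)
    -- the Yang–Baxter equation in components
    (yb1 : ∀ x y z, Q.tgt x = Q.src y → Q.tgt y = Q.src z →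
      hd (hd x y) (hd (tl x y) z) = hd x (hd y z))
    (yb2 : ∀ x y z, Q.tgt x = Q.src y → Q.tgt y = Q.src z →
      tl (hd x y) (hd (tl x y) z) = hd (tl x (hd y z)) (tl y z))
    (yb3 : ∀ x y z, Q.tgt x = Q.src y → Q.tgt y = Q.src z →
      tl (tl x y) z = tl (tl x (hd y z)) (tl y z))
    -- involutivity
    (inv1 : ∀ x y, Q.tgt x = Q.src y → hd (hd x y) (tl x y) = x)
    (inv2 : ∀ x y, Q.tgt x = Q.src y → tl (hd x y) (tl x y) = y)
    -- left-non-degeneracy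
    (lnd : ∀ x : A, Function.Bijective fun y : {y : A // Q.src y = Q.tgt x} =>
      (⟨hd x y.1, hs x y.1 y.2.symm⟩ : {z : A // Q.src z = Q.src x}))
    -- right-non-degeneracy
    (rnd : ∀ y : A, Function.Bijective fun x : {x : A // Q.tgt x = Q.src y} =>
      (⟨tl x.1 y, ht x.1 y x.2⟩ : {z : A // Q.tgt z = Q.tgt y}))
    :
    -- conclusion 1: the structure category is right-cancellative
    (∀ (a b c : Q.SC hd tl) (f : b ⟶ c) (x y : a ⟶ b), x ≫ f = y ≫ f → x = y) ∧
    -- conclusion 2: it is left-cancellative (so, with conclusion 1, cancellative)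
    (∀ (a b c : Q.SC hd tl) (f : a ⟶ b) (x y : b ⟶ c), f ≫ x = f ≫ y → x = y) ∧
    -- conclusion 3: any two morphisms with the same target admit a left-lcm; in particular
    -- the structure category is a left-Ore category
    (∀ (b c d : Q.SC hd tl) (f : b ⟶ d) (g : c ⟶ d),
      ∃ (a : Q.SC hd tl) (u : a ⟶ b) (v : a ⟶ c),
        u ≫ f = v ≫ g ∧
        ∀ (e : Q.SC hd tl) (u' : e ⟶ b) (v' : e ⟶ c),
          u' ≫ f = v' ≫ g → ∃ w : e ⟶ a, u' ≫ f = w ≫ (u ≫ f)) :=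
  structureCategory_leftOre_general Q hd tl hs hm ht yb1 yb3 inv1 inv2 lnd rnd
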